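/- arXiv:2312.07912 — 4 statements merged into one kernel-verified Lean document; each statement's English description precedes it below -/
import Mathlib

section
/- For a prime p ≥ 3 (or more generally for any a ∈ Δ_p with |a|_p > 1) and s with |s|_p < p^{(p-2)/(p-1)}, the p-adic series Σ_{k=0}^∞ C(1-s, k) B_k a^{-k} converges in ℂ_p, where C(1-s,k) is the binomial coefficient and B_k are Bernoulli numbers. -/
/-!
The recursion `B_n / n! = -∑_{k<n} (B_k / k!) / (n + 1 - k)!`, Legendre's bound
`(p - 1) v_p(m!) ≤ m - 1` and the ultrametric inequality give `‖B_n / n!‖ ≤ ρ ^ n` with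
`ρ = p ^ (1 / (p - 1))`. Since `ℚ_[p]` has value group `p ^ ℤ`, `‖s‖ < p ^ ((p - 2) / (p - 1)) ≤ p`
forces `‖s‖ ≤ 1`, so the numerator `(1 - s)(-s)⋯(2 - s - k)` is integral, and `‖a‖ > 1` forces
`‖a‖ ≥ p > ρ` for `p ≥ 3`. The `k`-th term is therefore at most `(ρ / ‖a‖) ^ k`.
-/

open Finset Nat

noncomputable def padicBernoulliRate (p : ℕ) : ℝ := (p : ℝ) ^ ((p - 1 : ℕ) : ℝ)⁻¹

namespace padicBernoulliRate

variable (p : ℕ) [hp : Fact p.Prime]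

lemma one_le : 1 ≤ padicBernoulliRate p :=
  Real.one_le_rpow (mod_cast hp.out.one_le) (by positivity)

lemma nonneg : 0 ≤ padicBernoulliRate p :=
  zero_le_one.trans (one_le p)

lemma pow_sub_one : padicBernoulliRate p ^ (p - 1) = p :=
  Real.rpow_inv_natCast_pow (by positivity) (by have := hp.out.two_le; omega)

lemma lt_self (hp3 : 3 ≤ p) : padicBernoulliRate p < p := by
  refine Real.rpow_lt_self_of_one_lt (mod_cast hp.out.one_lt) ?_
  rw [inv_lt_one₀ (by norm_cast; omega)]
  norm_cast
  omega

end padicBernoulliRate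

theorem bernoulli_div_factorial_eq_neg_sum {n : ℕ} (hn : n ≠ 0) :
    bernoulli n / n ! = -∑ k ∈ range n, bernoulli k / k ! / (n + 1 - k)! := by
  have hsum : ∑ k ∈ range (n + 1), bernoulli k / k ! / (n + 1 - k)! =
      (∑ k ∈ range (n + 1), ((n + 1).choose k : ℚ) * bernoulli k) / (n + 1)! := by
    rw [sum_div]
    refine sum_congr rfl fun k hk => ?_
    rw [Nat.cast_choose ℚ (by grind)]
    field_simp
  rw [sum_bernoulli, if_neg (by omega), zero_div, sum_range_succ,
    show n + 1 - n = 1 by omega, factorial_one, cast_one, div_one] at hsum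
  linear_combination hsum

namespace IsUltrametricDist

lemma norm_sub_le_max {E : Type*} [SeminormedAddGroup E] [IsUltrametricDist E] (x y : E) :
    ‖x - y‖ ≤ max ‖x‖ ‖y‖ := by
  simpa [sub_eq_add_neg] using norm_add_le_max x (-y)

lemma norm_prod_range_sub_natCast_le_one {K : Type*} [NormedField K] [IsUltrametricDist K]
    {x : K} (hx : ‖x‖ ≤ 1) (k : ℕ) : ‖∏ i ∈ range k, (x - i)‖ ≤ 1 := by
  rw [norm_prod]
  refine prod_le_one (fun _ _ => norm_nonneg _) fun i _ => ?_
  exact (norm_sub_le_max x i).trans (max_le hx (norm_natCast_le_one K i))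

end IsUltrametricDist

namespace Padic

variable {p : ℕ} [Fact p.Prime]

lemma norm_le_one_of_norm_lt {x : ℚ_[p]} (hx : ‖x‖ < p) : ‖x‖ ≤ 1 := by
  simpa using (norm_le_pow_iff_norm_lt_pow_add_one x 0).mpr (by simpa using hx)

lemma norm_inv_natCast {n : ℕ} (hn : n ≠ 0) :
    ‖(n : ℚ_[p])⁻¹‖ = (p : ℝ) ^ padicValNat p n := by
  rw [norm_inv, norm_eq_zpow_neg_valuation (by exact_mod_cast hn), valuation_natCast, zpow_neg,
    inv_inv, zpow_natCast]

lemma norm_inv_factorial_le (m : ℕ) :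
    ‖(m ! : ℚ_[p])⁻¹‖ ≤ padicBernoulliRate p ^ (m - 1) := by
  have hval : (p - 1) * padicValNat p m ! ≤ m - 1 := by
    rcases eq_or_ne m 0 with rfl | hm
    · simp
    have := sub_one_mul_padicValNat_factorial_lt_of_ne_zero p hm
    omega
  calc ‖(m ! : ℚ_[p])⁻¹‖ = (padicBernoulliRate p ^ (p - 1)) ^ padicValNat p m ! := by
        rw [norm_inv_natCast (factorial_ne_zero m), padicBernoulliRate.pow_sub_one]
    _ ≤ padicBernoulliRate p ^ (m - 1) := by
        rw [← pow_mul]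
        exact pow_le_pow_right₀ (padicBernoulliRate.one_le p) hval

lemma norm_bernoulli_div_factorial_le (n : ℕ) :
    ‖(bernoulli n / n ! : ℚ_[p])‖ ≤ padicBernoulliRate p ^ n := by
  induction n using Nat.strong_induction_on with
  | _ n ih =>
  rcases eq_or_ne n 0 with rfl | hn
  · simp
  have hrec := congrArg (fun q : ℚ => (q : ℚ_[p])) (bernoulli_div_factorial_eq_neg_sum hn)
  push_cast at hrec
  rw [hrec, norm_neg]
  refine IsUltrametricDist.norm_sum_le_of_forall_le_of_nonneg
    (pow_nonneg (padicBernoulliRate.nonneg p) n) fun k hk => ?_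
  have hk : k < n := mem_range.mp hk
  calc ‖(bernoulli k / k ! / (n + 1 - k)! : ℚ_[p])‖
      = ‖(bernoulli k / k ! : ℚ_[p])‖ * ‖((n + 1 - k)! : ℚ_[p])⁻¹‖ := by
        rw [div_eq_mul_inv _ ((n + 1 - k)! : ℚ_[p]), norm_mul]
    _ ≤ padicBernoulliRate p ^ k * padicBernoulliRate p ^ (n + 1 - k - 1) := by
        gcongr
        exacts [pow_nonneg (padicBernoulliRate.nonneg p) k, ih k hk, norm_inv_factorial_le _]
    _ = padicBernoulliRate p ^ n := by
        rw [← pow_add]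
        congr 1
        omega

lemma summable_binomial_mul_bernoulli {s a : ℚ_[p]} (hs : ‖s‖ ≤ 1)
    (ha : padicBernoulliRate p < ‖a‖) :
    Summable fun k : ℕ =>
      (∏ i ∈ range k, (1 - s - i)) / k ! * (bernoulli k : ℚ_[p]) * a⁻¹ ^ k := by
  have ha0 : 0 < ‖a‖ := (padicBernoulliRate.nonneg p).trans_lt ha
  have hs' : ‖1 - s‖ ≤ 1 := (IsUltrametricDist.norm_sub_le_max 1 s).trans (by simp [hs])
  refine Summable.of_norm_bounded (summable_geometric_of_lt_one
    (div_nonneg (padicBernoulliRate.nonneg p) ha0.le) ((div_lt_one ha0).mpr ha)) fun k => ?_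
  calc ‖(∏ i ∈ range k, (1 - s - i)) / k ! * (bernoulli k : ℚ_[p]) * a⁻¹ ^ k‖
      = ‖∏ i ∈ range k, (1 - s - i)‖ * ‖(bernoulli k / k ! : ℚ_[p])‖ * ‖a‖⁻¹ ^ k := by
        rw [div_mul_eq_mul_div, mul_div_assoc, norm_mul, norm_mul, norm_pow, norm_inv]
    _ ≤ 1 * padicBernoulliRate p ^ k * ‖a‖⁻¹ ^ k := by
        gcongr
        exacts [IsUltrametricDist.norm_prod_range_sub_natCast_le_one hs' k,
          norm_bernoulli_div_factorial_le k]
    _ = (padicBernoulliRate p / ‖a‖) ^ k := by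
        rw [one_mul, div_eq_mul_inv, mul_pow]

end Padic

/-- For an odd prime `p`, `a ∈ ℚ_p` with `|a|_p > 1` and `s` with
`|s|_p < p^{(p-2)/(p-1)}`, the series `Σ_k C(1-s,k) B_k a^{-k}` converges
`p`-adically, where `C(1-s,k) = (1-s)(-s)⋯(2-s-k)/k!` is the generalized
binomial coefficient and `B_k` are the Bernoulli numbers. -/
theorem stmt_11 (p : ℕ) [Fact p.Prime] (hp : 3 ≤ p) (a : ℚ_[p]) (ha : 1 < ‖a‖)
    (s : ℚ_[p]) (hs : ‖s‖ < (p : ℝ) ^ (((p : ℝ) - 2) / ((p : ℝ) - 1))) :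
    Summable (fun k : ℕ =>
      ((∏ i ∈ Finset.range k, (1 - s - (i : ℚ_[p]))) / (k.factorial : ℚ_[p])) *
        (bernoulli k : ℚ_[p]) * (a⁻¹) ^ k) := by
  have hp1 : (1 : ℝ) < p := by exact_mod_cast (Fact.out : p.Prime).one_lt
  have hs1 : ‖s‖ ≤ 1 := by
    refine Padic.norm_le_one_of_norm_lt (hs.trans_le (Real.rpow_le_self_of_one_le hp1.le ?_))
    exact div_le_one_of_le₀ (by linarith) (by linarith)
  have hpa : (p : ℝ) ≤ ‖a‖ := by
    by_contra! h
    exact ha.not_ge (Padic.norm_le_one_of_norm_lt h)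
  exact Padic.summable_binomial_mul_bernoulli hs1 ((padicBernoulliRate.lt_self p hp).trans_le hpa)
end

section
/- The normalized Apéry-like numbers defined by à _2(n) := Σ_{k=0}^n (-1)^k C(-1/2, k)² C(n, k) satisfy the recurrence 4n² Ã_2(n) - (8n² - 8n + 3) Ã_2(n-1) + 4(n-1)² Ã_2(n-2) = 0 for n ≥ 2, with Ã_2(0) = 1 and Ã_2(1) = 3/4. -/
/-- Generalized binomial coefficient `C(a,k) = a(a-1)⋯(a-k+1)/k!` over `ℚ`. -/
def qbinom (a : ℚ) (k : ℕ) : ℚ :=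
  (∏ i ∈ Finset.range k, (a - i)) / k.factorial

/-- Normalized Apéry-like numbers `Ã₂(n) = Σ_{k=0}^n (-1)^k C(-1/2,k)² C(n,k)`. -/
def Atilde2 (n : ℕ) : ℚ :=
  ∑ k ∈ Finset.range (n + 1), (-1) ^ k * (qbinom (-(1 / 2)) k) ^ 2 * (n.choose k : ℚ)

lemma qbinom_succ (a : ℚ) (k : ℕ) :
    qbinom a (k + 1) = qbinom a k * (a - k) / (k + 1) := by
  simp only [qbinom, Finset.prod_range_succ, Nat.factorial_succ]
  push_cast
  rw [div_mul_eq_mul_div, div_div]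
  ring

lemma qbinom_half_succ (k : ℕ) :
    2 * ((k : ℚ) + 1) * qbinom (-(1 / 2)) (k + 1) = -(2 * k + 1) * qbinom (-(1 / 2)) k := by
  rw [qbinom_succ]
  have hk : ((k : ℚ) + 1) ≠ 0 := by positivity
  field_simp
  ring

/-- `(n+1)·C(n,k) = C(n+1,k)·(n+1-k)` over ℕ (valid for all k). -/
lemma nat_choose_pred (n k : ℕ) :
    (n + 1) * (n.choose k) = (n + 1).choose k * ((n + 1) - k) := by
  rw [← Nat.choose_succ_right_eq, ← Nat.add_one_mul_choose_eq]

lemma key (m k : ℕ) (hk : k ≤ m + 2) :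
    ((m : ℚ) + 2) * (4 * ((m : ℚ) + 2) ^ 2 *
        ((-1) ^ k * (qbinom (-(1 / 2)) k) ^ 2 * ((m + 2).choose k : ℚ))
      - (8 * ((m : ℚ) + 2) ^ 2 - 8 * ((m : ℚ) + 2) + 3) *
        ((-1) ^ k * (qbinom (-(1 / 2)) k) ^ 2 * ((m + 1).choose k : ℚ))
      + 4 * (((m : ℚ) + 2) - 1) ^ 2 *
        ((-1) ^ k * (qbinom (-(1 / 2)) k) ^ 2 * (m.choose k : ℚ)))
    = (-4 * ((k : ℚ) + 1) ^ 3 * (-1) ^ (k + 1) * (qbinom (-(1 / 2)) (k + 1)) ^ 2 *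
        ((m + 2).choose (k + 1) : ℚ))
      - (-4 * (k : ℚ) ^ 3 * (-1) ^ k * (qbinom (-(1 / 2)) k) ^ 2 * ((m + 2).choose k : ℚ)) := by
  set c := qbinom (-(1 / 2)) k with hc
  set c' := qbinom (-(1 / 2)) (k + 1) with hc'
  set B : ℚ := ((m + 2).choose k : ℚ) with hB
  set C1 : ℚ := ((m + 1).choose k : ℚ) with hC1
  set C0 : ℚ := (m.choose k : ℚ) with hC0
  set C2 : ℚ := ((m + 2).choose (k + 1) : ℚ) with hC2
  have hB1 : C1 * ((m : ℚ) + 2) = B * (((m : ℚ) + 2) - k) := by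
    have t := nat_choose_pred (m + 1) k
    have hcast : (((m + 1 + 1) : ℕ) : ℚ) * C1 = B * (((m + 1 + 1 - k : ℕ)) : ℚ) := by
      rw [hC1, hB]; exact_mod_cast t
    rw [Nat.cast_sub (by omega : k ≤ m + 1 + 1)] at hcast
    push_cast at hcast
    linarith [hcast]
  have hB2 : C0 * (((m : ℚ) + 1) * ((m : ℚ) + 2))
      = B * (((m : ℚ) + 2) - k) * (((m : ℚ) + 1) - k) := by
    rcases Nat.lt_or_ge k (m + 2) with h | h
    · have hk1 : k ≤ m + 1 := by omega
      have t1 := nat_choose_pred m k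
      have ht1 : ((m : ℚ) + 1) * C0 = C1 * (((m : ℚ) + 1) - k) := by
        have hcast : (((m + 1) : ℕ) : ℚ) * C0 = C1 * (((m + 1 - k : ℕ)) : ℚ) := by
          rw [hC0, hC1]; exact_mod_cast t1
        rw [Nat.cast_sub hk1] at hcast
        push_cast at hcast
        linarith [hcast]
      calc C0 * (((m : ℚ) + 1) * ((m : ℚ) + 2))
          = (((m : ℚ) + 1) * C0) * ((m : ℚ) + 2) := by ring
        _ = (C1 * (((m : ℚ) + 1) - k)) * ((m : ℚ) + 2) := by rw [ht1]
        _ = (C1 * ((m : ℚ) + 2)) * (((m : ℚ) + 1) - k) := by ring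
        _ = B * (((m : ℚ) + 2) - k) * (((m : ℚ) + 1) - k) := by rw [hB1]
    · have hk2 : k = m + 2 := le_antisymm hk h
      have h0 : C0 = 0 := by
        rw [hC0, Nat.choose_eq_zero_of_lt (by omega)]; norm_num
      rw [h0, hk2]
      push_cast
      ring
  have hB3 : C2 * ((k : ℚ) + 1) = B * (((m : ℚ) + 2) - k) := by
    have t := Nat.choose_succ_right_eq (m + 2) k
    have hcast : C2 * (((k + 1) : ℕ) : ℚ) = B * (((m + 2 - k : ℕ)) : ℚ) := by
      rw [hC2, hB]; exact_mod_cast t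
    rw [Nat.cast_sub hk] at hcast
    push_cast at hcast
    linarith [hcast]
  have hcq := qbinom_half_succ k
  rw [← hc, ← hc'] at hcq
  have hc2 : 4 * ((k : ℚ) + 1) ^ 2 * c' ^ 2 = (2 * k + 1) ^ 2 * c ^ 2 := by
    linear_combination (2 * ((k : ℚ) + 1) * c' - (2 * k + 1) * c) * hcq
  have hsign : ((-1 : ℚ)) ^ (k + 1) = -(-1 : ℚ) ^ k := by
    rw [pow_succ]; ring
  rw [hsign]
  linear_combination
    (-(8 * ((m : ℚ) + 2) ^ 2 - 8 * ((m : ℚ) + 2) + 3)) * (-1 : ℚ) ^ k * c ^ 2 * hB1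
    + 4 * ((m : ℚ) + 1) * (-1 : ℚ) ^ k * c ^ 2 * hB2
    + (-(2 * (k : ℚ) + 1) ^ 2) * (-1 : ℚ) ^ k * c ^ 2 * hB3
    + (-((k : ℚ) + 1)) * (-1 : ℚ) ^ k * C2 * hc2

/-- `Ã₂` satisfies the recurrence `4n² Ã₂(n) - (8n²-8n+3) Ã₂(n-1) + 4(n-1)² Ã₂(n-2) = 0`
for `n ≥ 2`, with `Ã₂(0) = 1` and `Ã₂(1) = 3/4`. -/
theorem stmt_15 :
    (∀ n : ℕ, 2 ≤ n →
        4 * (n : ℚ) ^ 2 * Atilde2 n - (8 * (n : ℚ) ^ 2 - 8 * n + 3) * Atilde2 (n - 1) +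
          4 * ((n : ℚ) - 1) ^ 2 * Atilde2 (n - 2) = 0) ∧
      Atilde2 0 = 1 ∧ Atilde2 1 = 3 / 4 := by
  refine ⟨?_, ?_, ?_⟩
  · intro n hn
    obtain ⟨m, rfl⟩ : ∃ m, n = m + 2 := ⟨n - 2, by omega⟩
    have hsub1 : m + 2 - 1 = m + 1 := rfl
    have hsub2 : m + 2 - 2 = m := rfl
    rw [hsub1, hsub2]
    have e1 : Atilde2 (m + 1)
        = ∑ k ∈ Finset.range (m + 3),
            (-1) ^ k * (qbinom (-(1 / 2)) k) ^ 2 * ((m + 1).choose k : ℚ) := by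
      rw [show m + 3 = (m + 2) + 1 from rfl, Finset.sum_range_succ]
      simp [Atilde2, Nat.choose_eq_zero_of_lt]
    have e0 : Atilde2 m
        = ∑ k ∈ Finset.range (m + 3),
            (-1) ^ k * (qbinom (-(1 / 2)) k) ^ 2 * (m.choose k : ℚ) := by
      rw [show m + 3 = (m + 2) + 1 from rfl, Finset.sum_range_succ,
        show m + 2 = (m + 1) + 1 from rfl, Finset.sum_range_succ]
      have z1 : m.choose (m + 1) = 0 := Nat.choose_eq_zero_of_lt (by omega)
      have z2 : m.choose (m + 1 + 1) = 0 := Nat.choose_eq_zero_of_lt (by omega)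
      simp [Atilde2, z1, z2]
    have e2 : Atilde2 (m + 2)
        = ∑ k ∈ Finset.range (m + 3),
            (-1) ^ k * (qbinom (-(1 / 2)) k) ^ 2 * ((m + 2).choose k : ℚ) := rfl
    set h : ℕ → ℚ := fun k =>
      -4 * (k : ℚ) ^ 3 * (-1) ^ k * (qbinom (-(1 / 2)) k) ^ 2 * ((m + 2).choose k : ℚ) with hh
    have key' : ∀ k ∈ Finset.range (m + 3),
        ((m : ℚ) + 2) * (4 * ((m : ℚ) + 2) ^ 2 *
            ((-1) ^ k * (qbinom (-(1 / 2)) k) ^ 2 * ((m + 2).choose k : ℚ))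
          - (8 * ((m : ℚ) + 2) ^ 2 - 8 * ((m : ℚ) + 2) + 3) *
            ((-1) ^ k * (qbinom (-(1 / 2)) k) ^ 2 * ((m + 1).choose k : ℚ))
          + 4 * (((m : ℚ) + 2) - 1) ^ 2 *
            ((-1) ^ k * (qbinom (-(1 / 2)) k) ^ 2 * (m.choose k : ℚ)))
        = h (k + 1) - h k := by
      intro k hkmem
      have hk : k ≤ m + 2 := by
        simp only [Finset.mem_range] at hkmem; omega
      have hkey := key m k hk
      simp only [hh]
      push_cast
      linear_combination hkey
    have hmain : ((m : ℚ) + 2) *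
        (4 * ((m : ℚ) + 2) ^ 2 * Atilde2 (m + 2)
          - (8 * ((m : ℚ) + 2) ^ 2 - 8 * ((m : ℚ) + 2) + 3) * Atilde2 (m + 1)
          + 4 * (((m : ℚ) + 2) - 1) ^ 2 * Atilde2 m) = 0 := by
      rw [e0, e1, e2]
      simp only [Finset.mul_sum]
      rw [← Finset.sum_sub_distrib, ← Finset.sum_add_distrib, Finset.mul_sum]
      rw [Finset.sum_congr rfl key', Finset.sum_range_sub h]
      have hz : (m + 2).choose (m + 3) = 0 := Nat.choose_eq_zero_of_lt (by omega)
      simp [hh, hz]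
    have hne : ((m : ℚ) + 2) ≠ 0 := by positivity
    rcases mul_eq_zero.mp hmain with h' | h'
    · exact absurd h' hne
    · push_cast
      linarith [h']
  · norm_num [Atilde2, qbinom, Finset.sum_range_succ]
  · norm_num [Atilde2, qbinom, Finset.sum_range_succ, Finset.prod_range_succ]
end

section
/- Let p be an odd prime and write n in base p as n = n_0 + n_1 p + ⋯ + n_k p^k with 0 ≤ n_j < p. Then the Apéry numbers A_2(n) = Σ_{k=0}^n C(n,k)² C(n+k,k) satisfy A_2(n) ≡ Π_{j=0}^k A_2(n_j) (mod p). -/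
open Finset Nat

/-- The Apéry numbers `A₂(n) = Σ_{k=0}^n C(n,k)² C(n+k,k)` associated with `ζ(2)`. -/
def apery2 (n : ℕ) : ℕ :=
  ∑ k ∈ Finset.range (n + 1), (n.choose k) ^ 2 * ((n + k).choose k)

section aux

variable {p : ℕ} [Fact p.Prime]

/-- Lucas for a split sum. -/
lemma lucas_split {x u y v : ℕ} (hx : x < p) (hy : y < p) :
    (((x + p * u).choose (y + p * v) : ZMod p)) = (x.choose y : ℕ) * (u.choose v : ℕ) := by
  have h := (Choose.choose_modEq_choose_mod_mul_choose_div_nat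
    (p := p) (n := x + p * u) (k := y + p * v))
  have h1 : (x + p * u) % p = x := by
    rw [Nat.add_mul_mod_self_left, Nat.mod_eq_of_lt hx]
  have h2 : (x + p * u) / p = u := by
    rw [Nat.add_mul_div_left _ _ (Fact.out : p.Prime).pos, Nat.div_eq_of_lt hx, Nat.zero_add]
  have h3 : (y + p * v) % p = y := by
    rw [Nat.add_mul_mod_self_left, Nat.mod_eq_of_lt hy]
  have h4 : (y + p * v) / p = v := by
    rw [Nat.add_mul_div_left _ _ (Fact.out : p.Prime).pos, Nat.div_eq_of_lt hy, Nat.zero_add]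
  rw [h1, h2, h3, h4] at h
  have := (ZMod.natCast_eq_natCast_iff _ _ _).mpr h
  push_cast at this ⊢
  exact this

lemma term_eq {a b i j : ℕ} (ha : a < p) (hi : i < p) :
    ((((a + p * b).choose (i + p * j)) ^ 2 *
        ((a + p * b + (i + p * j)).choose (i + p * j)) : ℕ) : ZMod p)
      = ((a.choose i ^ 2 * ((a + i).choose i) : ℕ) : ZMod p)
        * ((b.choose j ^ 2 * ((b + j).choose j) : ℕ) : ZMod p) := by
  have hmain : ((a + p * b).choose (i + p * j) : ZMod p)
      = (a.choose i : ℕ) * (b.choose j : ℕ) := lucas_split ha hi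
  have hsum : a + p * b + (i + p * j) = (a + i) + p * (b + j) := by ring
  by_cases hc : a + i < p
  · have h2 : ((a + p * b + (i + p * j)).choose (i + p * j) : ZMod p)
        = ((a + i).choose i : ℕ) * ((b + j).choose j : ℕ) := by
      rw [hsum]; exact lucas_split hc hi
    push_cast
    rw [hmain, h2]; ring
  · push_neg at hc
    have hz1 : (((a + i).choose i : ℕ) : ZMod p) = 0 := by
      rw [ZMod.natCast_eq_zero_iff]
      have := (Fact.out : p.Prime).dvd_choose_add ha hi hc
      rwa [Nat.choose_symm_add] at this
    have hz2 : ((a + p * b + (i + p * j)).choose (i + p * j) : ZMod p) = 0 := by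
      have hrw : a + p * b + (i + p * j) = (a + i - p) + p * (b + j + 1) := by
        have e : p * (b + j + 1) = p * b + p * j + p := by ring
        rw [e]; omega
      rw [hrw, lucas_split (by omega : a + i - p < p) hi,
        Nat.choose_eq_zero_of_lt (by omega : a + i - p < i)]
      simp
    push_cast
    rw [hz2, hz1]; ring

lemma apery2_cast_eq (a : ℕ) (ha : a < p) :
    ((apery2 a : ℕ) : ZMod p) = ∑ i ∈ range p, ((a.choose i ^ 2 * ((a + i).choose i) : ℕ) : ZMod p) := by
  rw [apery2, Nat.cast_sum]
  apply Finset.sum_subset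
  · exact Finset.range_subset_range.mpr ha
  · intro i _ hi
    rw [Finset.mem_range, not_lt] at hi
    rw [Nat.choose_eq_zero_of_lt (by omega)]
    simp

/-- The key multiplicative step. -/
lemma apery2_step {a : ℕ} (b : ℕ) (ha : a < p) :
    ((apery2 (a + p * b) : ℕ) : ZMod p) = (apery2 a : ℕ) * (apery2 b : ℕ) := by
  have hpos : 0 < p := (Fact.out : p.Prime).pos
  set n := a + p * b with hn
  -- extend sum to range (p * (b+1))
  have h1 : ((apery2 n : ℕ) : ZMod p)
      = ∑ k ∈ range (p * (b + 1)), ((n.choose k ^ 2 * ((n + k).choose k) : ℕ) : ZMod p) := by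
    rw [apery2, Nat.cast_sum]
    apply Finset.sum_subset
    · refine Finset.range_subset_range.mpr ?_
      have e : p * (b + 1) = p * b + p := by ring
      omega
    · intro k _ hk
      rw [Finset.mem_range, not_lt] at hk
      rw [Nat.choose_eq_zero_of_lt (by omega)]
      simp
  -- reindex
  have h2 : ∑ k ∈ range (p * (b + 1)), ((n.choose k ^ 2 * ((n + k).choose k) : ℕ) : ZMod p)
      = ∑ ij ∈ range p ×ˢ range (b + 1),
          ((n.choose (ij.1 + p * ij.2) ^ 2 * ((n + (ij.1 + p * ij.2)).choose (ij.1 + p * ij.2)) : ℕ) : ZMod p) := by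
    apply Finset.sum_nbij' (i := fun k => (k % p, k / p)) (j := fun ij => ij.1 + p * ij.2)
    · intro k hk
      rw [Finset.mem_range] at hk
      simp only [Finset.mem_product, Finset.mem_range]
      refine ⟨Nat.mod_lt _ hpos, ?_⟩
      exact (Nat.div_lt_iff_lt_mul hpos).mpr (by rwa [Nat.mul_comm (b + 1) p])
    · intro ij hij
      simp only [Finset.mem_product, Finset.mem_range] at hij
      rw [Finset.mem_range]
      calc ij.1 + p * ij.2 < p + p * ij.2 := by omega
        _ = p * (ij.2 + 1) := by ring
        _ ≤ p * (b + 1) := by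
            exact Nat.mul_le_mul_left p (by omega)
    · intro k _; exact Nat.mod_add_div k p
    · intro ij hij
      simp only [Finset.mem_product, Finset.mem_range] at hij
      have h1 : (ij.1 + p * ij.2) % p = ij.1 := by
        rw [Nat.add_mul_mod_self_left, Nat.mod_eq_of_lt hij.1]
      have h2 : (ij.1 + p * ij.2) / p = ij.2 := by
        rw [Nat.add_mul_div_left _ _ hpos, Nat.div_eq_of_lt hij.1, Nat.zero_add]
      ext <;> simp [h1, h2]
    · intro k hk
      simp [Nat.mod_add_div]
  -- factor termwise
  have h3 : ∀ ij ∈ range p ×ˢ range (b + 1),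
      ((n.choose (ij.1 + p * ij.2) ^ 2 * ((n + (ij.1 + p * ij.2)).choose (ij.1 + p * ij.2)) : ℕ) : ZMod p)
      = ((a.choose ij.1 ^ 2 * ((a + ij.1).choose ij.1) : ℕ) : ZMod p)
        * ((b.choose ij.2 ^ 2 * ((b + ij.2).choose ij.2) : ℕ) : ZMod p) := by
    intro ij hij
    simp only [Finset.mem_product, Finset.mem_range] at hij
    exact term_eq ha hij.1
  rw [h1, h2, Finset.sum_congr rfl h3, Finset.sum_product]
  show (∑ x ∈ range p, ∑ y ∈ range (b + 1),
      ((a.choose x ^ 2 * ((a + x).choose x) : ℕ) : ZMod p)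
        * ((b.choose y ^ 2 * ((b + y).choose y) : ℕ) : ZMod p)) = _
  rw [← Finset.sum_mul_sum, apery2_cast_eq a ha]
  congr 1
  rw [apery2, Nat.cast_sum]

end aux

/-- If `p` is an odd prime and `n = n₀ + n₁ p + ⋯ + n_k p^k` in base `p`, then
`A₂(n) ≡ Π_j A₂(n_j) (mod p)`. -/
theorem stmt_17 (p : ℕ) (hp : p.Prime) (hodd : p ≠ 2) (n : ℕ) :
    apery2 n ≡ ((Nat.digits p n).map apery2).prod [MOD p] := by
  haveI : Fact p.Prime := ⟨hp⟩
  rw [← ZMod.natCast_eq_natCast_iff]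
  induction n using Nat.strong_induction_on with
  | _ n ih =>
    rcases Nat.eq_zero_or_pos n with h0 | h0
    · subst h0; simp [apery2]
    · have hp1 : 1 < p := hp.one_lt
      rw [Nat.digits_def' hp1 h0, List.map_cons, List.prod_cons]
      have hdiv : n / p < n := Nat.div_lt_self h0 hp1
      have hrec := ih (n / p) hdiv
      have hstep := apery2_step (p := p) (n / p) (Nat.mod_lt n hp.pos)
      rw [Nat.mod_add_div n p] at hstep
      push_cast at hstep hrec ⊢
      rw [hstep, hrec]
end

section
/- The Apéry numbers A_2(n) = Σ_{k=0}^n C(n,k)² C(n+k,k) satisfy the recurrence n² A_2(n) - (11n² - 11n + 3) A_2(n-1) - (n-1)² A_2(n-2) = 0 for all n ≥ 2, with A_2(0) = 1 and A_2(1) = 3. -/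
/-!
Zeilberger's creative telescoping. Writing `T n k = C(n,k)² C(n+k,k)` for the summand and
`Q n k = k² + 6nk - 5k + 7n - 11n²`, the certificate `G n 0 = 0`, `G n (k+1) = T (n-1) k · Q n (k+1)`
satisfies
`n² T n k - (11n² - 11n + 3) T (n-1) k - (n-1)² T (n-2) k = G n (k+1) - G n k`,
which is checked by expressing every binomial coefficient in it as a rational multiple of
`C(n-1,k-1)` or `C(n+k-1,k-1)`. Summing over `k` telescopes to `G n (n+1) = 0`.
-/

open Finset

theorem Nat.cast_choose_succ_right_mul {R : Type*} [CommRing R] (n k : ℕ) :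
    (n.choose (k + 1) : R) * (k + 1) = n.choose k * (n - k) := by
  rcases le_or_gt k n with hkn | hnk
  · have h := congrArg (Nat.cast (R := R)) (Nat.choose_succ_right_eq n k)
    push_cast [Nat.cast_sub hkn] at h
    exact h
  · simp [Nat.choose_eq_zero_of_lt hnk, Nat.choose_eq_zero_of_lt (Nat.lt_succ_of_lt hnk)]

theorem Nat.cast_choose_mul_succ {R : Type*} [CommRing R] (n k : ℕ) :
    (n.choose k : R) * (n + 1) = (n + 1).choose k * (n + 1 - k) := by
  rcases le_or_gt k (n + 1) with hkn | hnk
  · have h := congrArg (Nat.cast (R := R)) (Nat.choose_mul_succ_eq n k)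
    push_cast [Nat.cast_sub hkn] at h
    exact h
  · simp [Nat.choose_eq_zero_of_lt hnk, Nat.choose_eq_zero_of_lt (Nat.lt_of_succ_lt hnk)]

section Field

variable {K : Type*} [Field K] [CharZero K]

theorem Nat.cast_choose_succ_succ_eq_div (n k : ℕ) :
    ((n + 1).choose (k + 1) : K) = (n + 1) * n.choose k / (k + 1) := by
  rw [eq_div_iff (Nat.cast_add_one_ne_zero k)]
  exact_mod_cast (Nat.add_one_mul_choose_eq n k).symm

theorem Nat.cast_choose_succ_right_eq_div (n k : ℕ) :
    (n.choose (k + 1) : K) = (n - k) * n.choose k / (k + 1) := by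
  rw [eq_div_iff (Nat.cast_add_one_ne_zero k), Nat.cast_choose_succ_right_mul, mul_comm]

theorem Nat.cast_choose_eq_div_succ (n k : ℕ) :
    (n.choose k : K) = (n + 1 - k) * (n + 1).choose k / (n + 1) := by
  rw [eq_div_iff (Nat.cast_add_one_ne_zero n), Nat.cast_choose_mul_succ, mul_comm]

end Field

namespace Apery2

def term (n k : ℕ) : ℕ :=
  n.choose k ^ 2 * (n + k).choose k

theorem apery2_eq_sum_term {n N : ℕ} (h : n + 1 ≤ N) :
    apery2 n = ∑ k ∈ range N, term n k := by
  refine sum_subset (range_subset_range.2 h) fun k _ hk => ?_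
  rw [mem_range, not_lt] at hk
  simp [Nat.choose_eq_zero_of_lt (Nat.lt_of_succ_le hk)]

/-- The certificate `G (m + 2)`, indexed by `m` to avoid truncated subtraction. -/
def cert (m : ℕ) : ℕ → ℤ
  | 0 => 0
  | k + 1 => term (m + 1) k *
      ((k + 1 : ℤ) ^ 2 + 6 * (m + 2) * (k + 1) - 5 * (k + 1) + 7 * (m + 2) - 11 * (m + 2) ^ 2)

theorem term_recurrence (m k : ℕ) :
    ((m : ℤ) + 2) ^ 2 * term (m + 2) k - (11 * ((m : ℤ) + 2) ^ 2 - 11 * ((m : ℤ) + 2) + 3) *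
        term (m + 1) k - ((m : ℤ) + 1) ^ 2 * term m k = cert m (k + 1) - cert m k := by
  cases k with
  | zero =>
    simp only [cert, term, Nat.choose_zero_right]
    push_cast
    ring
  | succ k =>
    qify
    simp only [cert, term]
    push_cast
    have hA₂ : ((m + 2).choose (k + 1) : ℚ) = (m + 2) * (m + 1).choose k / (k + 1) := by
      rw [Nat.cast_choose_succ_succ_eq_div]
      push_cast
      ring
    have hA₁ : ((m + 1).choose (k + 1) : ℚ) = (m + 1 - k) * (m + 1).choose k / (k + 1) := by
      rw [Nat.cast_choose_succ_right_eq_div]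
      push_cast
      ring
    have hA₀ : (m.choose (k + 1) : ℚ) = (m - k) * ((m + 1).choose (k + 1)) / (m + 1) := by
      rw [Nat.cast_choose_eq_div_succ]
      push_cast
      ring
    have hB₂ : ((m + 2 + (k + 1)).choose (k + 1) : ℚ) =
        (m + 3 + k) * (m + 2 + k).choose k / (k + 1) := by
      rw [show m + 2 + (k + 1) = m + 2 + k + 1 by ring, Nat.cast_choose_succ_succ_eq_div]
      push_cast
      ring
    have hB₁ : ((m + 1 + (k + 1)).choose (k + 1) : ℚ) = (m + 2) * (m + 2 + k).choose k / (k + 1) := by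
      rw [show m + 1 + (k + 1) = m + 2 + k by ring, Nat.cast_choose_succ_right_eq_div]
      push_cast
      ring
    have hB₀ : ((m + (k + 1)).choose (k + 1) : ℚ) = (m + 1) * (m + 1 + k).choose k / (k + 1) := by
      rw [show m + (k + 1) = m + 1 + k by ring, Nat.cast_choose_succ_right_eq_div]
      push_cast
      ring
    have hB : ((m + 1 + k).choose k : ℚ) = (m + 2) * (m + 2 + k).choose k / (m + 2 + k) := by
      rw [Nat.cast_choose_eq_div_succ, show m + 1 + k + 1 = m + 2 + k by ring]
      push_cast
      ring
    rw [hA₂, hB₂, hB₁, hA₀, hA₁, hB₀, hB]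
    field_simp
    ring

theorem apery2_recurrence (m : ℕ) :
    ((m : ℤ) + 2) ^ 2 * apery2 (m + 2) - (11 * ((m : ℤ) + 2) ^ 2 - 11 * ((m : ℤ) + 2) + 3) *
      apery2 (m + 1) - ((m : ℤ) + 1) ^ 2 * apery2 m = 0 := by
  rw [apery2_eq_sum_term (N := m + 3) (by omega), apery2_eq_sum_term (N := m + 3) (by omega),
    apery2_eq_sum_term (N := m + 3) (by omega)]
  push_cast
  simp only [mul_sum, ← sum_sub_distrib, term_recurrence, sum_range_sub]
  simp [cert, term]

end Apery2

/-- `A₂` satisfies `n² A₂(n) - (11n²-11n+3) A₂(n-1) - (n-1)² A₂(n-2) = 0` for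
`n ≥ 2`, with `A₂(0) = 1`, `A₂(1) = 3`. -/
theorem stmt_18 :
    (∀ n : ℕ, 2 ≤ n →
        (n : ℤ) ^ 2 * apery2 n - (11 * (n : ℤ) ^ 2 - 11 * n + 3) * apery2 (n - 1) -
          ((n : ℤ) - 1) ^ 2 * apery2 (n - 2) = 0) ∧
      apery2 0 = 1 ∧ apery2 1 = 3 := by
  refine ⟨fun n hn => ?_, by decide, by decide⟩
  obtain ⟨m, rfl⟩ := Nat.exists_eq_add_of_le' hn
  rw [show m + 2 - 1 = m + 1 by omega, Nat.add_sub_cancel]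
  push_cast
  linear_combination Apery2.apery2_recurrence m
end
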